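/- Let τ : {a,b}* → {a,b}* be the function with τ(1) = 1 (the empty word), τ(w) = (ab)^{|w|} for every nonempty word w beginning with the letter a, and τ(w) = (ba)^{|w|} for every nonempty word w beginning with the letter b. Then τ is not G-continuous: there exists a language L ⊆ {a,b}* recognized by a finite group such that the preimage τ⁻¹(L) is not recognized by any finite group. -/
import Mathlib


/-- The two-letter alphabet `{a, b}`. -/
inductive AB : Type
  | a : AB
  | b : AB
deriving DecidableEq

/-- `wpow x k` is the `k`-fold concatenation `xᵏ` of the word `x`. -/
def wpow {A : Type*} (x : List A) : ℕ → List A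
  | 0 => []
  | n + 1 => x ++ wpow x n

/-- `τ(1) = 1`, `τ(w) = (ab)^{|w|}` if `w` begins with `a`, and
`τ(w) = (ba)^{|w|}` if `w` begins with `b`. -/
def tau : List AB → List AB
  | [] => []
  | AB.a :: rest => wpow [AB.a, AB.b] (rest.length + 1)
  | AB.b :: rest => wpow [AB.b, AB.a] (rest.length + 1)

/-- `L` is recognized by a finite group. -/
def RecogByFinGroup {A : Type} (L : Set (List A)) : Prop :=
  ∃ (G : Type) (_ : Fintype G) (_ : Group G)
    (φ : FreeMonoid A →* G) (S : Set G),
    L = {w : List A | φ (FreeMonoid.ofList w) ∈ S}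

-- auxiliary
lemma ofList_append {A : Type} (u v : List A) :
    FreeMonoid.ofList (u ++ v) = FreeMonoid.ofList u * FreeMonoid.ofList v := rfl

lemma hom_wpow {A G : Type} [Monoid G] (ψ : FreeMonoid A →* G) (u : List A) (k : ℕ) :
    ψ (FreeMonoid.ofList (wpow u k)) = (ψ (FreeMonoid.ofList u)) ^ k := by
  induction k with
  | zero => simp [wpow]
  | succ n ih => rw [wpow, ofList_append, map_mul, ih, pow_succ']

lemma hom_replicate {A G : Type} [Monoid G] (ψ : FreeMonoid A →* G) (s : A) (k : ℕ) :
    ψ (FreeMonoid.ofList (List.replicate k s)) = (ψ (FreeMonoid.of s)) ^ k := by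
  induction k with
  | zero => simp
  | succ n ih =>
    rw [List.replicate_succ, show FreeMonoid.ofList (s :: List.replicate n s) = FreeMonoid.of s * FreeMonoid.ofList (List.replicate n s) from rfl, map_mul, ih, pow_succ']

abbrev G3 := Equiv.Perm (Fin 3)

def fab : AB → G3 := fun s => match s with
  | AB.a => Equiv.swap 0 1
  | AB.b => Equiv.swap 1 2

noncomputable def phi : FreeMonoid AB →* G3 := FreeMonoid.lift fab

def cc : G3 := Equiv.swap 0 1 * Equiv.swap 1 2

lemma phi_ba : phi (FreeMonoid.ofList [AB.b, AB.a]) = Equiv.swap 1 2 * Equiv.swap 0 1 := by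
  have : FreeMonoid.ofList [AB.b, AB.a] = FreeMonoid.of AB.b * FreeMonoid.of AB.a := rfl
  rw [this, map_mul]
  simp [phi, fab]

lemma phi_ab : phi (FreeMonoid.ofList [AB.a, AB.b]) = cc := by
  have : FreeMonoid.ofList [AB.a, AB.b] = FreeMonoid.of AB.a * FreeMonoid.of AB.b := rfl
  rw [this, map_mul]
  simp [phi, fab, cc]


/-- `τ` is not G-continuous: some language recognized by a finite group has a
preimage under `τ` that is not recognized by any finite group. -/
theorem tau_not_g_continuous :
    ∃ L : Set (List AB), RecogByFinGroup L ∧ ¬ RecogByFinGroup (tau ⁻¹' L) := by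
  refine ⟨{w | phi (FreeMonoid.ofList w) ∈ ({cc} : Set G3)},
    ⟨G3, inferInstance, inferInstance, phi, {cc}, rfl⟩, ?_⟩
  rintro ⟨H, fH, gH, ψ, T, hT⟩
  set n := 3 * orderOf (ψ (FreeMonoid.of AB.b)) with hn
  set w2 : List AB := List.replicate n AB.b ++ [AB.a] with hw2
  -- [a] is in the preimage
  have h1 : [AB.a] ∈ tau ⁻¹' {w | phi (FreeMonoid.ofList w) ∈ ({cc} : Set G3)} := by
    show phi (FreeMonoid.ofList (tau [AB.a])) ∈ ({cc} : Set G3)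
    have : tau [AB.a] = [AB.a, AB.b] := rfl
    rw [this, phi_ab]; rfl
  -- w2 is not in the preimage
  have hm : ∃ m, n = 3 * m := ⟨_, hn⟩
  obtain ⟨m, hm⟩ := hm
  have hnpos : 0 < n := by
    have := orderOf_pos (ψ (FreeMonoid.of AB.b)); omega
  have htau2 : tau w2 = wpow [AB.b, AB.a] (n + 1) := by
    obtain ⟨k, hk⟩ : ∃ k, n = k + 1 := ⟨n - 1, by omega⟩
    rw [hw2, hk, List.replicate_succ, List.cons_append]
    show wpow [AB.b, AB.a] ((List.replicate k AB.b ++ [AB.a]).length + 1) = _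
    simp
  have h2 : w2 ∉ tau ⁻¹' {w | phi (FreeMonoid.ofList w) ∈ ({cc} : Set G3)} := by
    intro h
    have hval : phi (FreeMonoid.ofList (tau w2)) = cc := h
    rw [htau2, hom_wpow, phi_ba] at hval
    have h3 : (Equiv.swap 1 2 * Equiv.swap 0 1 : G3) ^ 3 = 1 := by decide
    rw [hm] at hval
    rw [show 3 * m + 1 = 3 * m + 1 from rfl, pow_succ, pow_mul, h3, one_pow, one_mul] at hval
    exact absurd hval (by decide)
  -- but ψ maps them to the same element
  have hψ : ψ (FreeMonoid.ofList [AB.a]) = ψ (FreeMonoid.ofList w2) := by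
    rw [hw2, ofList_append, map_mul, hom_replicate, hn, pow_mul', pow_orderOf_eq_one,
      one_pow, one_mul]
  rw [hT] at h1 h2
  exact h2 (by simpa [Set.mem_setOf_eq, ← hψ] using h1)
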